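/- arXiv:2007.00561 — 2 statements merged into one kernel-verified Lean document; each statement's English description precedes it below -/
import Mathlib

section
/- Under the integrability, boundedness, and qualification assumptions (A1)-(A3), strong duality holds: the primal value V(0) = inf { E^P[ξ] : P ∈ 𝒫, E^P[ζ] ∈ {0_m} × ℝ_-^ℓ } equals the dual value D(0) = sup { d(λ) : λ ∈ ℝ^m × ℝ_+^ℓ }, where d(λ) = inf_{P ∈ 𝒫} ( E^P[ξ] + ⟨λ, E^P[ζ]⟩ ). -/
/-!
Lagrangian duality by separating a point from a convex set. The moment points
`(E^P[ζ], E^P[ξ])`, `P ∈ 𝒫`, form a convex subset of `ℝ^(m+ℓ) × ℝ`. Let `S` be the set of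
`(z, r)` such that some `P ∈ 𝒫` satisfies the perturbed constraint `E^P[ζ] + z ∈ K`,
`K = {0_m} × ℝ₋^ℓ`, with `E^P[ξ] ≤ r`. Then `S` is convex and, by (A2) and (A3), contains
`ball 0 ε × (M, ∞)`. For `r < V 0` the point `(0, r)` is not in `S`, so a hyperplane separates
the two. It cannot be vertical, because `(0, M + 1)` is an interior point of `S`. Scaling its
`ℝ`-coefficient to `1` turns the other coefficients into a multiplier `λ` in the polar cone of
`K` with `d λ ≥ r`. Weak duality gives the reverse inequality.
-/

open MeasureTheory Set

theorem integral_ofReal_smul_add_ofReal_smul {Ω : Type*} [MeasurableSpace Ω] {P Q : Measure Ω}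
    {a b : ℝ} (ha : 0 ≤ a) (hb : 0 ≤ b) {f : Ω → ℝ} (hP : Integrable f P) (hQ : Integrable f Q) :
    ∫ ω, f ω ∂(ENNReal.ofReal a • P + ENNReal.ofReal b • Q)
      = a * ∫ ω, f ω ∂P + b * ∫ ω, f ω ∂Q := by
  rw [integral_add_measure (hP.smul_measure ENNReal.ofReal_ne_top)
      (hQ.smul_measure ENNReal.ofReal_ne_top), integral_smul_measure, integral_smul_measure,
    ENNReal.toReal_ofReal ha, ENNReal.toReal_ofReal hb, smul_eq_mul, smul_eq_mul]

theorem convex_image_integral_pair {Ω ι : Type*} [MeasurableSpace Ω] {Pc : Set (Measure Ω)}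
    (hconv : ∀ P ∈ Pc, ∀ Q ∈ Pc, ∀ θ : ℝ, 0 ≤ θ → θ ≤ 1 →
      (ENNReal.ofReal θ) • P + (ENNReal.ofReal (1 - θ)) • Q ∈ Pc)
    {ξ : Ω → ℝ} {ζ : ι → Ω → ℝ} (hξ : ∀ P ∈ Pc, Integrable ξ P)
    (hζ : ∀ P ∈ Pc, ∀ i, Integrable (ζ i) P) :
    Convex ℝ ((fun P => ((fun i => ∫ ω, ζ i ω ∂P), ∫ ω, ξ ω ∂P)) '' Pc) := by
  rintro _ ⟨P, hP, rfl⟩ _ ⟨Q, hQ, rfl⟩ a b ha hb hab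
  obtain rfl : a = 1 - b := by linarith
  refine ⟨_, hconv P hP Q hQ (1 - b) ha (by linarith), ?_⟩
  ext i
  · simp [integral_ofReal_smul_add_ofReal_smul ha hb (hζ P hP i) (hζ Q hQ i)]
  · simp [integral_ofReal_smul_add_ofReal_smul ha hb (hξ P hP) (hξ Q hQ)]

theorem Convex.exists_le_of_mem_interior_of_notMem {E : Type*} [TopologicalSpace E]
    [AddCommGroup E] [Module ℝ E] [IsTopologicalAddGroup E] [ContinuousSMul ℝ E] {S : Set E}
    (hS : Convex ℝ S) {x y : E} (hy : y ∈ interior S) (hx : x ∉ S) :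
    ∃ f : E →L[ℝ] ℝ, (∀ q ∈ S, f q ≤ f x) ∧ f y < f x := by
  obtain ⟨f, hf⟩ := geometric_hahn_banach_open_point hS.interior isOpen_interior
    (fun h => hx (interior_subset h))
  refine ⟨f, fun q hq => ?_, hf y hy⟩
  have hS_sub : S ⊆ closure (interior S) :=
    (hS.closure_interior_eq_closure_of_nonempty_interior ⟨y, hy⟩).symm ▸ subset_closure
  exact closure_minimal (fun q hq => (hf q hq).le) (isClosed_le f.continuous continuous_const)
    (hS_sub hq)

theorem ContinuousLinearMap.apply_mk_eq_dotProduct_add {ι : Type*} [Fintype ι] [DecidableEq ι]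
    (f : ((ι → ℝ) × ℝ) →L[ℝ] ℝ) (z : ι → ℝ) (r : ℝ) :
    f (z, r) = (fun i => f (Pi.single i 1, 0)) ⬝ᵥ z + f (0, 1) * r := by
  have hsingle : ∀ i, (Pi.single i 1 : ι → ℝ) = fun j => if i = j then 1 else 0 :=
    fun i => funext fun j => by simp [Pi.single_apply, eq_comm]
  have hz : f (z, 0) = (fun i => f (Pi.single i 1, 0)) ⬝ᵥ z := by
    simpa [dotProduct, mul_comm, hsingle] using
      (f ∘L ContinuousLinearMap.inl ℝ _ ℝ).toLinearMap.pi_apply_eq_sum_univ z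
  calc f (z, r) = f (z, 0) + f (r • (0, 1)) := by rw [← map_add]; simp
    _ = _ := by rw [hz, map_smul, smul_eq_mul, mul_comm]

theorem nonpos_of_forall_pos_mul_le {a C : ℝ} (h : ∀ t : ℝ, 0 < t → t * a ≤ C) : a ≤ 0 := by
  by_contra! ha
  have := h ((|C| + 1) / a) (by positivity)
  rw [div_mul_cancel₀ _ ha.ne'] at this
  linarith [le_abs_self C]

noncomputable section LagrangeDuality

variable {ι α : Type*}

def primalValue (K : PointedCone ℝ (ι → ℝ)) (s : Set α) (F : α → ℝ) (G : α → ι → ℝ) : EReal :=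
  sInf ((fun x => (F x : EReal)) '' {x | x ∈ s ∧ G x ∈ K})

/-- Lies between the strict epigraph and the epigraph of the perturbation function
`z ↦ inf {F x | x ∈ s, G x + z ∈ K}`. -/
def feasibleEpigraph (K : PointedCone ℝ (ι → ℝ)) (s : Set α) (F : α → ℝ) (G : α → ι → ℝ) :
    Set ((ι → ℝ) × ℝ) :=
  {q | ∃ x ∈ s, G x + q.1 ∈ K ∧ F x ≤ q.2}

variable {K : PointedCone ℝ (ι → ℝ)} {s : Set α} {F : α → ℝ} {G : α → ι → ℝ}

theorem primalValue_le_of_mem_feasibleEpigraph {r : ℝ}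
    (h : ((0 : ι → ℝ), r) ∈ feasibleEpigraph K s F G) : primalValue K s F G ≤ r := by
  obtain ⟨x, hx, hGx, hFx⟩ := h
  have hfeas : primalValue K s F G ≤ F x := sInf_le ⟨x, ⟨hx, by simpa using hGx⟩, rfl⟩
  exact hfeas.trans (EReal.coe_le_coe_iff.2 hFx)

theorem convex_feasibleEpigraph (hC : Convex ℝ ((fun x => (G x, F x)) '' s)) :
    Convex ℝ (feasibleEpigraph K s F G) := by
  rintro q ⟨x, hx, hGx, hFx⟩ q' ⟨y, hy, hGy, hFy⟩ a b ha hb hab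
  obtain ⟨z, hz, hzxy⟩ := hC ⟨x, hx, rfl⟩ ⟨y, hy, rfl⟩ ha hb hab
  simp only [Prod.smul_mk, Prod.mk_add_mk, Prod.mk.injEq, smul_eq_mul] at hzxy
  refine ⟨z, hz, ?_, ?_⟩
  · rw [show G z + (a • q + b • q').1 = a • (G x + q.1) + b • (G y + q'.1) by
      rw [hzxy.1, Prod.fst_add, Prod.smul_fst, Prod.smul_fst]; module]
    exact K.convex hGx hGy ha hb hab
  · rw [hzxy.2, Prod.snd_add, Prod.smul_snd, Prod.smul_snd, smul_eq_mul, smul_eq_mul]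
    gcongr

theorem add_mem_feasibleEpigraph {q : (ι → ℝ) × ℝ} (hq : q ∈ feasibleEpigraph K s F G)
    {k : ι → ℝ} (hk : k ∈ K) : (q.1 + k, q.2) ∈ feasibleEpigraph K s F G := by
  obtain ⟨x, hx, hGx, hFx⟩ := hq
  exact ⟨x, hx, add_assoc (G x) q.1 k ▸ K.add_mem hGx hk, hFx⟩

theorem neg_mem_feasibleEpigraph {x : α} (hx : x ∈ s) :
    (-G x, F x) ∈ feasibleEpigraph K s F G :=
  ⟨x, hx, by simp, le_rfl⟩

variable [Fintype ι]

def polarCone (K : PointedCone ℝ (ι → ℝ)) : Set (ι → ℝ) := {lam | ∀ k ∈ K, lam ⬝ᵥ k ≤ 0}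

def dualFunction (s : Set α) (F : α → ℝ) (G : α → ι → ℝ) (lam : ι → ℝ) : EReal :=
  sInf ((fun x => ((F x + lam ⬝ᵥ G x : ℝ) : EReal)) '' s)

theorem dualFunction_le_primalValue {lam : ι → ℝ} (hlam : lam ∈ polarCone K) :
    dualFunction s F G lam ≤ primalValue K s F G := by
  refine le_sInf ?_
  rintro _ ⟨x, ⟨hx, hGx⟩, rfl⟩
  exact (sInf_le (mem_image_of_mem _ hx)).trans
    (EReal.coe_le_coe_iff.2 (by linarith [hlam _ hGx]))

variable {ε M : ℝ}

theorem zero_mk_mem_interior_feasibleEpigraph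
    (hqual : ∀ z : ι → ℝ, ‖z‖ ≤ ε → ∃ x ∈ s, G x + z ∈ K) (hM : ∀ x ∈ s, F x ≤ M)
    (hε : 0 < ε) {r : ℝ} (hr : M < r) :
    ((0 : ι → ℝ), r) ∈ interior (feasibleEpigraph K s F G) := by
  refine interior_maximal ?_ (Metric.isOpen_ball.prod isOpen_Ioi) ⟨Metric.mem_ball_self hε, hr⟩
  rintro ⟨z, t⟩ ⟨hz, ht⟩
  obtain ⟨x, hx, hGx⟩ := hqual z (mem_ball_zero_iff.1 hz).le
  exact ⟨x, hx, hGx, (hM x hx).trans (le_of_lt ht)⟩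

theorem primalValue_le
    (hqual : ∀ z : ι → ℝ, ‖z‖ ≤ ε → ∃ x ∈ s, G x + z ∈ K) (hM : ∀ x ∈ s, F x ≤ M)
    (hε : 0 < ε) : primalValue K s F G ≤ M := by
  obtain ⟨x, hx, hGx⟩ := hqual 0 (by simpa using hε.le)
  exact primalValue_le_of_mem_feasibleEpigraph ⟨x, hx, hGx, hM x hx⟩

theorem exists_mem_polarCone_forall_le (hC : Convex ℝ ((fun x => (G x, F x)) '' s))
    (hqual : ∀ z : ι → ℝ, ‖z‖ ≤ ε → ∃ x ∈ s, G x + z ∈ K) (hM : ∀ x ∈ s, F x ≤ M)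
    (hε : 0 < ε) {r : ℝ} (hr : (r : EReal) < primalValue K s F G) :
    ∃ lam ∈ polarCone K, ∀ x ∈ s, r ≤ F x + lam ⬝ᵥ G x := by
  classical
  have hrM : r < M := by exact_mod_cast hr.trans_le (primalValue_le hqual hM hε)
  have hint := zero_mk_mem_interior_feasibleEpigraph hqual hM hε (lt_add_one M)
  have hout : ((0 : ι → ℝ), r) ∉ feasibleEpigraph K s F G :=
    fun h => (primalValue_le_of_mem_feasibleEpigraph h).not_gt hr
  obtain ⟨f, hfS, hfint⟩ :=
    (convex_feasibleEpigraph hC).exists_le_of_mem_interior_of_notMem hint hout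
  set c : ι → ℝ := fun i => f (Pi.single i 1, 0)
  set μ := f (0, 1)
  have hf : ∀ z t, f (z, t) = c ⬝ᵥ z + μ * t := f.apply_mk_eq_dotProduct_add
  have hμ : μ < 0 := by
    simp only [hf, dotProduct_zero, zero_add] at hfint
    nlinarith
  have hcK : ∀ k ∈ K, c ⬝ᵥ k ≤ 0 := fun k hk =>
    nonpos_of_forall_pos_mul_le (C := μ * r - μ * (M + 1)) fun t ht => by
      have := hfS _ (add_mem_feasibleEpigraph (interior_subset hint) (K.smul_mem ht.le hk))
      simp only [hf, zero_add, dotProduct_zero, dotProduct_smul, smul_eq_mul] at this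
      linarith
  refine ⟨-μ⁻¹ • c, fun k hk => ?_, fun x hx => ?_⟩
  · rw [smul_dotProduct, smul_eq_mul]
    exact mul_nonpos_of_nonneg_of_nonpos (by simp [hμ.le]) (hcK k hk)
  · have hsep := hfS _ (neg_mem_feasibleEpigraph hx)
    simp only [hf, dotProduct_neg, dotProduct_zero, zero_add] at hsep
    rw [smul_dotProduct, smul_eq_mul]
    calc r = μ⁻¹ * (μ * r) := (inv_mul_cancel_left₀ hμ.ne r).symm
      _ ≤ μ⁻¹ * (-(c ⬝ᵥ G x) + μ * F x) := mul_le_mul_of_nonpos_left hsep (inv_nonpos.2 hμ.le)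
      _ = F x + -μ⁻¹ * (c ⬝ᵥ G x) := by rw [mul_add, inv_mul_cancel_left₀ hμ.ne]; ring

theorem primalValue_eq_sSup_dualFunction (hC : Convex ℝ ((fun x => (G x, F x)) '' s))
    (hqual : ∀ z : ι → ℝ, ‖z‖ ≤ ε → ∃ x ∈ s, G x + z ∈ K) (hM : ∀ x ∈ s, F x ≤ M)
    (hε : 0 < ε) : primalValue K s F G = sSup (dualFunction s F G '' polarCone K) := by
  refine le_antisymm (EReal.ge_of_forall_gt_iff_ge.1 fun r hr => ?_)
    (sSup_le (forall_mem_image.2 fun _ => dualFunction_le_primalValue))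
  obtain ⟨lam, hlam, hle⟩ := exists_mem_polarCone_forall_le hC hqual hM hε hr
  exact le_sSup_of_le (mem_image_of_mem _ hlam)
    (le_sInf (forall_mem_image.2 fun x hx => EReal.coe_le_coe_iff.2 (hle x hx)))

end LagrangeDuality

def signCone (m l : ℕ) : PointedCone ℝ (Fin (m + l) → ℝ) where
  carrier := {w | ∀ i : Fin (m + l), ((i : ℕ) < m → w i = 0) ∧ (m ≤ (i : ℕ) → w i ≤ 0)}
  add_mem' {v w} hv hw i := ⟨fun hi => by simp [(hv i).1 hi, (hw i).1 hi],
    fun hi => add_nonpos ((hv i).2 hi) ((hw i).2 hi)⟩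
  zero_mem' i := by simp
  smul_mem' c w hw i := ⟨fun hi => by simp [(hw i).1 hi],
    fun hi => mul_nonpos_of_nonneg_of_nonpos c.2 ((hw i).2 hi)⟩

theorem polarCone_signCone (m l : ℕ) :
    polarCone (signCone m l) = {lam | ∀ i : Fin (m + l), m ≤ (i : ℕ) → 0 ≤ lam i} := by
  ext lam
  constructor
  · intro hlam i hi
    have hsingle : -Pi.single i 1 ∈ signCone m l := fun j => by
      by_cases hj : j = i
      · subst hj; simp [hi, not_lt.2 hi]
      · simp [hj]
    simpa using hlam _ hsingle
  · intro hlam w hw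
    refine Finset.sum_nonpos fun i _ => ?_
    rcases lt_or_ge (i : ℕ) m with hi | hi
    · simp [(hw i).1 hi]
    · exact mul_nonpos_of_nonneg_of_nonpos (hlam i hi) ((hw i).2 hi)

theorem strong_duality_general
    {Ω : Type*} [MeasurableSpace Ω] (m l : ℕ)
    (Pc : Set (Measure Ω))
    (hconv : ∀ P ∈ Pc, ∀ Q ∈ Pc, ∀ θ : ℝ, 0 ≤ θ → θ ≤ 1 →
      (ENNReal.ofReal θ) • P + (ENNReal.ofReal (1 - θ)) • Q ∈ Pc)
    (ξ : Ω → ℝ) (ζ : Fin (m + l) → Ω → ℝ)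
    (hξ : ∀ P ∈ Pc, Integrable ξ P)
    (hζ : ∀ P ∈ Pc, ∀ i, Integrable (ζ i) P)
    (M : ℝ) (hM : ∀ P ∈ Pc, |∫ ω, ξ ω ∂P| ≤ M)
    (ε : ℝ) (hε : 0 < ε)
    (hqual : ∀ z : Fin (m + l) → ℝ, ‖z‖ ≤ ε → ∃ P ∈ Pc, ∀ i : Fin (m + l),
        ((i : ℕ) < m → (∫ ω, ζ i ω ∂P) + z i = 0) ∧
        (m ≤ (i : ℕ) → (∫ ω, ζ i ω ∂P) + z i ≤ 0))
    (V : (Fin (m + l) → ℝ) → EReal)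
    (hV : ∀ z, V z = sInf ((fun P => ((∫ ω, ξ ω ∂P : ℝ) : EReal)) ''
      {P | P ∈ Pc ∧ ∀ i : Fin (m + l),
        ((i : ℕ) < m → (∫ ω, ζ i ω ∂P) + z i = 0) ∧
        (m ≤ (i : ℕ) → (∫ ω, ζ i ω ∂P) + z i ≤ 0)}))
    (d : (Fin (m + l) → ℝ) → EReal)
    (hd : ∀ lam : Fin (m + l) → ℝ,
      d lam = sInf ((fun P =>
        (((∫ ω, ξ ω ∂P) + ∑ i, lam i * (∫ ω, ζ i ω ∂P) : ℝ) : EReal)) '' Pc)) :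
    V 0 = sSup (d '' {lam : Fin (m + l) → ℝ | ∀ i : Fin (m + l), m ≤ (i : ℕ) → 0 ≤ lam i}) := by
  have hV0 : V 0 = primalValue (signCone m l) Pc (fun P => ∫ ω, ξ ω ∂P)
      (fun P i => ∫ ω, ζ i ω ∂P) := by
    simp only [hV, Pi.zero_apply, add_zero]
    rfl
  have hd' : d = dualFunction Pc (fun P => ∫ ω, ξ ω ∂P) (fun P i => ∫ ω, ζ i ω ∂P) := funext hd
  rw [hV0, hd', ← polarCone_signCone]
  exact primalValue_eq_sSup_dualFunction (convex_image_integral_pair hconv hξ hζ) hqual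
    (fun P hP => (le_abs_self _).trans (hM P hP)) hε

/-- strong duality. Under (A1) integrability, (A2) boundedness
`sup_{P∈Pc}|E^P[ξ]| ≤ M`, (A3) the qualification condition, and convexity of `Pc`,
the primal value `V(0)` equals the dual value `D(0) = sup_{λ ∈ ℝ^m × ℝ_+^ℓ} d(λ)`. -/
theorem strong_duality
    {Ω : Type*} [MeasurableSpace Ω] (m l : ℕ)
    (Pc : Set (Measure Ω))
    (hprob : ∀ P ∈ Pc, IsProbabilityMeasure P)
    (hconv : ∀ P ∈ Pc, ∀ Q ∈ Pc, ∀ θ : ℝ, 0 ≤ θ → θ ≤ 1 →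
      (ENNReal.ofReal θ) • P + (ENNReal.ofReal (1 - θ)) • Q ∈ Pc)
    (ξ : Ω → ℝ) (ζ : Fin (m + l) → Ω → ℝ)
    (hξ : ∀ P ∈ Pc, Integrable ξ P)
    (hζ : ∀ P ∈ Pc, ∀ i, Integrable (ζ i) P)
    (M : ℝ) (hM : ∀ P ∈ Pc, |∫ ω, ξ ω ∂P| ≤ M)
    (ε : ℝ) (hε : 0 < ε)
    (hqual : ∀ z : Fin (m + l) → ℝ, ‖z‖ ≤ ε → ∃ P ∈ Pc, ∀ i : Fin (m + l),
        ((i : ℕ) < m → (∫ ω, ζ i ω ∂P) + z i = 0) ∧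
        (m ≤ (i : ℕ) → (∫ ω, ζ i ω ∂P) + z i ≤ 0))
    (V : (Fin (m + l) → ℝ) → EReal)
    (hV : ∀ z, V z = sInf ((fun P => ((∫ ω, ξ ω ∂P : ℝ) : EReal)) ''
      {P | P ∈ Pc ∧ ∀ i : Fin (m + l),
        ((i : ℕ) < m → (∫ ω, ζ i ω ∂P) + z i = 0) ∧
        (m ≤ (i : ℕ) → (∫ ω, ζ i ω ∂P) + z i ≤ 0)}))
    (d : (Fin (m + l) → ℝ) → EReal)
    (hd : ∀ lam : Fin (m + l) → ℝ,
      d lam = sInf ((fun P =>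
        (((∫ ω, ξ ω ∂P) + ∑ i, lam i * (∫ ω, ζ i ω ∂P) : ℝ) : EReal)) '' Pc)) :
    V 0 = sSup (d '' {lam : Fin (m + l) → ℝ | ∀ i : Fin (m + l), m ≤ (i : ℕ) → 0 ≤ lam i}) :=
  strong_duality_general m l Pc hconv ξ ζ hξ hζ M hM ε hε hqual V hV d hd
end

section
/- Under assumptions (A1)-(A3), the parametrized value function V is Lipschitz continuous on the ball B_{ε/2}(0) with Lipschitz constant 4M/ε (with respect to the supremum norm). -/
/-!
Push every admissible measure forward to the point `(E^P[ζ], E^P[ξ])`; the image is a convex set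
whose second coordinate is bounded by `M`. Given `z₁, z₂` in `B_{ε/2}(0)`, write
`z₂ = θ z' + (1 - θ) z₁` with `‖z'‖ ≤ ε` and `θ ≤ 2‖z₂ - z₁‖/ε`. Mixing a point feasible at `z'`
(which exists by qualification) into any point feasible at `z₁` yields a point feasible at `z₂`
whose objective is larger by at most `2Mθ ≤ 4M‖z₂ - z₁‖/ε`.
-/

open MeasureTheory Set

noncomputable section

def valueFun {E : Type*} [Add E] (S : Set (E × ℝ)) (K : Set E) (z : E) : EReal :=
  sInf ((fun p : E × ℝ => (p.2 : EReal)) '' {p | p ∈ S ∧ p.1 + z ∈ K})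

section ValueFun

variable {E : Type*} {S : Set (E × ℝ)} {K : Set E} {M : ℝ}

theorem valueFun_le [Add E] {z : E} {p : E × ℝ} (hp : p ∈ S) (hpK : p.1 + z ∈ K) :
    valueFun S K z ≤ p.2 :=
  sInf_le ⟨p, ⟨hp, hpK⟩, rfl⟩

theorem valueFun_convexComb_le [AddCommGroup E] [Module ℝ E] (hS : Convex ℝ S)
    (hK : Convex ℝ K) (hM : ∀ p ∈ S, |p.2| ≤ M) {θ : ℝ} (hθ₀ : 0 ≤ θ) (hθ₁ : θ ≤ 1)
    {z' : E} {p' : E × ℝ} (hp' : p' ∈ S) (hp'K : p'.1 + z' ∈ K) (z₁ : E) :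
    valueFun S K (θ • z' + (1 - θ) • z₁) ≤ valueFun S K z₁ + ((2 * M * θ : ℝ) : EReal) := by
  rw [← EReal.sub_le_iff_le_add (Or.inl (EReal.coe_ne_bot _)) (Or.inl (EReal.coe_ne_top _))]
  refine le_sInf ?_
  rintro _ ⟨p, ⟨hp, hpK⟩, rfl⟩
  rw [EReal.sub_le_iff_le_add (Or.inl (EReal.coe_ne_bot _)) (Or.inl (EReal.coe_ne_top _))]
  set q := θ • p' + (1 - θ) • p
  have hq : q ∈ S := hS hp' hp hθ₀ (by linarith) (by ring)
  have hqK : q.1 + (θ • z' + (1 - θ) • z₁) ∈ K := by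
    convert hK hp'K hpK hθ₀ (sub_nonneg.2 hθ₁) (add_sub_cancel θ 1) using 1
    simp only [q, Prod.fst_add, Prod.smul_fst]
    module
  have hq₂ : q.2 ≤ p.2 + 2 * M * θ := by
    have hp'M := le_of_abs_le (hM p' hp')
    have hpM := neg_le_of_abs_le (hM p hp)
    simp only [q, Prod.snd_add, Prod.smul_snd, smul_eq_mul]
    nlinarith
  calc valueFun S K (θ • z' + (1 - θ) • z₁) ≤ q.2 := valueFun_le hq hqK
    _ ≤ ((p.2 + 2 * M * θ : ℝ) : EReal) := EReal.coe_le_coe_iff.2 hq₂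
    _ = _ := EReal.coe_add _ _

theorem exists_convexComb_eq_of_norm_le [NormedAddCommGroup E] [NormedSpace ℝ E] {ε : ℝ}
    (hε : 0 < ε) {z₁ z₂ : E} (hz₁ : ‖z₁‖ ≤ ε / 2) (hz₂ : ‖z₂‖ ≤ ε / 2) :
    ∃ θ : ℝ, ∃ z' : E, 0 ≤ θ ∧ θ ≤ 1 ∧ θ ≤ 2 * ‖z₂ - z₁‖ / ε ∧ ‖z'‖ ≤ ε ∧
      z₂ = θ • z' + (1 - θ) • z₁ := by
  set δ := ‖z₂ - z₁‖
  rcases le_or_gt (ε / 2) δ with hδ | hδ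
  · refine ⟨1, z₂, zero_le_one, le_rfl, ?_, by linarith, by simp⟩
    rw [le_div_iff₀ hε]
    linarith
  -- `z'` lies on the ray from `z₁` through `z₂`, at distance `ε / 2` from `z₁` (or `z' = z₁` if `z₂ = z₁`).
  set θ := 2 * δ / ε
  refine ⟨θ, z₁ + θ⁻¹ • (z₂ - z₁), by positivity, ?_, le_rfl, ?_, ?_⟩
  · rw [div_le_one hε]
    linarith
  · have hstep : ‖θ⁻¹ • (z₂ - z₁)‖ ≤ ε / 2 := by
      calc ‖θ⁻¹ • (z₂ - z₁)‖ = ε / 2 * (δ / δ) := by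
            rw [norm_smul, Real.norm_eq_abs, abs_of_nonneg (by positivity)]
            simp only [θ, inv_div]
            ring
        _ ≤ ε / 2 := mul_le_of_le_one_right (by positivity) (div_self_le_one δ)
    linarith [norm_add_le z₁ (θ⁻¹ • (z₂ - z₁))]
  · have hθ : θ • θ⁻¹ • (z₂ - z₁) = z₂ - z₁ := by
      rcases eq_or_ne θ 0 with h | h
      · have : δ = 0 := by simpa [θ, hε.ne'] using h
        rw [norm_eq_zero.mp this, smul_zero, smul_zero]
      · exact smul_inv_smul₀ h _
    calc z₂ = z₁ + θ • θ⁻¹ • (z₂ - z₁) := by rw [hθ]; abel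
      _ = θ • (z₁ + θ⁻¹ • (z₂ - z₁)) + (1 - θ) • z₁ := by module

theorem valueFun_le_add_norm_sub [NormedAddCommGroup E] [NormedSpace ℝ E] (hS : Convex ℝ S)
    (hK : Convex ℝ K) (hM : ∀ p ∈ S, |p.2| ≤ M) {ε : ℝ} (hε : 0 < ε)
    (hqual : ∀ z : E, ‖z‖ ≤ ε → ∃ p ∈ S, p.1 + z ∈ K) {z₁ z₂ : E}
    (hz₁ : ‖z₁‖ ≤ ε / 2) (hz₂ : ‖z₂‖ ≤ ε / 2) :
    valueFun S K z₂ ≤ valueFun S K z₁ + ((4 * M / ε * ‖z₂ - z₁‖ : ℝ) : EReal) := by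
  obtain ⟨θ, z', hθ₀, hθ₁, hθδ, hz', rfl⟩ := exists_convexComb_eq_of_norm_le hε hz₁ hz₂
  obtain ⟨p', hp', hp'K⟩ := hqual z' hz'
  have hM₀ : 0 ≤ M := (abs_nonneg _).trans (hM p' hp')
  have hbound : 2 * M * θ ≤ 4 * M / ε * ‖θ • z' + (1 - θ) • z₁ - z₁‖ := by
    calc 2 * M * θ ≤ 2 * M * (2 * ‖θ • z' + (1 - θ) • z₁ - z₁‖ / ε) := by gcongr
      _ = _ := by ring
  calc _ ≤ valueFun S K z₁ + ((2 * M * θ : ℝ) : EReal) :=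
        valueFun_convexComb_le hS hK hM hθ₀ hθ₁ hp' hp'K z₁
    _ ≤ _ := add_le_add le_rfl (EReal.coe_le_coe_iff.2 hbound)

end ValueFun

def mixture {Ω : Type*} [MeasurableSpace Ω] (θ : ℝ) (P Q : Measure Ω) : Measure Ω :=
  ENNReal.ofReal θ • P + ENNReal.ofReal (1 - θ) • Q

section Mixture

variable {Ω : Type*} [MeasurableSpace Ω]

theorem integral_mixture {P Q : Measure Ω} {f : Ω → ℝ} (hP : Integrable f P)
    (hQ : Integrable f Q) {θ : ℝ} (hθ₀ : 0 ≤ θ) (hθ₁ : θ ≤ 1) :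
    ∫ ω, f ω ∂(mixture θ P Q) = θ * ∫ ω, f ω ∂P + (1 - θ) * ∫ ω, f ω ∂Q := by
  rw [mixture, integral_add_measure (hP.smul_measure ENNReal.ofReal_ne_top)
      (hQ.smul_measure ENNReal.ofReal_ne_top),
    integral_smul_measure, integral_smul_measure,
    ENNReal.toReal_ofReal hθ₀, ENNReal.toReal_ofReal (by linarith), smul_eq_mul, smul_eq_mul]

theorem convex_image_integral {ι : Type*} {Pc : Set (Measure Ω)}
    (hconv : ∀ P ∈ Pc, ∀ Q ∈ Pc, ∀ θ : ℝ, 0 ≤ θ → θ ≤ 1 → mixture θ P Q ∈ Pc)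
    {ξ : Ω → ℝ} {ζ : ι → Ω → ℝ} (hξ : ∀ P ∈ Pc, Integrable ξ P)
    (hζ : ∀ P ∈ Pc, ∀ i, Integrable (ζ i) P) :
    Convex ℝ ((fun P => ((fun i => ∫ ω, ζ i ω ∂P), ∫ ω, ξ ω ∂P)) '' Pc) := by
  rintro _ ⟨P, hP, rfl⟩ _ ⟨Q, hQ, rfl⟩ a b ha hb hab
  obtain rfl : b = 1 - a := by linarith
  refine ⟨mixture a P Q, hconv P hP Q hQ a ha (by linarith), ?_⟩
  ext i
  · simp [integral_mixture (hζ P hP i) (hζ Q hQ i) ha (by linarith)]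
  · simp [integral_mixture (hξ P hP) (hξ Q hQ) ha (by linarith)]

end Mixture

/-- The cone `{0_m} × ℝ_-^ℓ`. -/
def constraintCone (m l : ℕ) : Set (Fin (m + l) → ℝ) :=
  {y | ∀ i : Fin (m + l), ((i : ℕ) < m → y i = 0) ∧ (m ≤ (i : ℕ) → y i ≤ 0)}

theorem convex_constraintCone (m l : ℕ) : Convex ℝ (constraintCone m l) := by
  intro y hy y' hy' a b ha hb _
  refine fun i => ⟨fun hi => ?_, fun hi => ?_⟩
  · simp [(hy i).1 hi, (hy' i).1 hi]
  · have := (hy i).2 hi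
    have := (hy' i).2 hi
    simp only [Pi.add_apply, Pi.smul_apply, smul_eq_mul]
    nlinarith

end

theorem value_function_lipschitz_general
    {Ω : Type*} [MeasurableSpace Ω] (m l : ℕ)
    (Pc : Set (Measure Ω))
    (hconv : ∀ P ∈ Pc, ∀ Q ∈ Pc, ∀ θ : ℝ, 0 ≤ θ → θ ≤ 1 →
      (ENNReal.ofReal θ) • P + (ENNReal.ofReal (1 - θ)) • Q ∈ Pc)
    (ξ : Ω → ℝ) (ζ : Fin (m + l) → Ω → ℝ)
    (hξ : ∀ P ∈ Pc, Integrable ξ P)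
    (hζ : ∀ P ∈ Pc, ∀ i, Integrable (ζ i) P)
    (M : ℝ) (hM : ∀ P ∈ Pc, |∫ ω, ξ ω ∂P| ≤ M)
    (ε : ℝ) (hε : 0 < ε)
    (hqual : ∀ z : Fin (m + l) → ℝ, ‖z‖ ≤ ε → ∃ P ∈ Pc, ∀ i : Fin (m + l),
        ((i : ℕ) < m → (∫ ω, ζ i ω ∂P) + z i = 0) ∧
        (m ≤ (i : ℕ) → (∫ ω, ζ i ω ∂P) + z i ≤ 0))
    (V : (Fin (m + l) → ℝ) → EReal)
    (hV : ∀ z, V z = sInf ((fun P => ((∫ ω, ξ ω ∂P : ℝ) : EReal)) ''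
      {P | P ∈ Pc ∧ ∀ i : Fin (m + l),
        ((i : ℕ) < m → (∫ ω, ζ i ω ∂P) + z i = 0) ∧
        (m ≤ (i : ℕ) → (∫ ω, ζ i ω ∂P) + z i ≤ 0)})) :
    ∀ z₁ z₂ : Fin (m + l) → ℝ, ‖z₁‖ ≤ ε / 2 → ‖z₂‖ ≤ ε / 2 →
      V z₂ ≤ V z₁ + ((4 * M / ε * ‖z₂ - z₁‖ : ℝ) : EReal) := by
  intro z₁ z₂ hz₁ hz₂
  set φ : Measure Ω → (Fin (m + l) → ℝ) × ℝ := fun P => ((fun i => ∫ ω, ζ i ω ∂P), ∫ ω, ξ ω ∂P)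
  have hVφ : ∀ z, V z = valueFun (φ '' Pc) (constraintCone m l) z := by
    intro z
    have hfeas : {p | p ∈ φ '' Pc ∧ p.1 + z ∈ constraintCone m l} =
        φ '' {P | P ∈ Pc ∧ (φ P).1 + z ∈ constraintCone m l} :=
      (image_inter_preimage _ _ _).symm
    rw [hV, valueFun, hfeas, image_image]
    rfl
  rw [hVφ, hVφ]
  refine valueFun_le_add_norm_sub (convex_image_integral hconv hξ hζ)
    (convex_constraintCone m l) ?_ hε (fun z hz => ?_) hz₁ hz₂
  · rintro _ ⟨P, hP, rfl⟩
    exact hM P hP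
  · obtain ⟨P, hP, hPK⟩ := hqual z hz
    exact ⟨φ P, mem_image_of_mem φ hP, hPK⟩

/-- under (A1)-(A3) the parametrized value function `V` is Lipschitz
continuous with constant `4M/ε` on the closed sup-norm ball `B_{ε/2}(0)`. -/
theorem value_function_lipschitz
    {Ω : Type*} [MeasurableSpace Ω] (m l : ℕ)
    (Pc : Set (Measure Ω))
    (hprob : ∀ P ∈ Pc, IsProbabilityMeasure P)
    (hconv : ∀ P ∈ Pc, ∀ Q ∈ Pc, ∀ θ : ℝ, 0 ≤ θ → θ ≤ 1 →
      (ENNReal.ofReal θ) • P + (ENNReal.ofReal (1 - θ)) • Q ∈ Pc)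
    (ξ : Ω → ℝ) (ζ : Fin (m + l) → Ω → ℝ)
    (hξ : ∀ P ∈ Pc, Integrable ξ P)
    (hζ : ∀ P ∈ Pc, ∀ i, Integrable (ζ i) P)
    (M : ℝ) (hM : ∀ P ∈ Pc, |∫ ω, ξ ω ∂P| ≤ M)
    (ε : ℝ) (hε : 0 < ε)
    (hqual : ∀ z : Fin (m + l) → ℝ, ‖z‖ ≤ ε → ∃ P ∈ Pc, ∀ i : Fin (m + l),
        ((i : ℕ) < m → (∫ ω, ζ i ω ∂P) + z i = 0) ∧
        (m ≤ (i : ℕ) → (∫ ω, ζ i ω ∂P) + z i ≤ 0))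
    (V : (Fin (m + l) → ℝ) → EReal)
    (hV : ∀ z, V z = sInf ((fun P => ((∫ ω, ξ ω ∂P : ℝ) : EReal)) ''
      {P | P ∈ Pc ∧ ∀ i : Fin (m + l),
        ((i : ℕ) < m → (∫ ω, ζ i ω ∂P) + z i = 0) ∧
        (m ≤ (i : ℕ) → (∫ ω, ζ i ω ∂P) + z i ≤ 0)})) :
    ∀ z₁ z₂ : Fin (m + l) → ℝ, ‖z₁‖ ≤ ε / 2 → ‖z₂‖ ≤ ε / 2 →
      V z₂ ≤ V z₁ + ((4 * M / ε * ‖z₂ - z₁‖ : ℝ) : EReal) :=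
  value_function_lipschitz_general m l Pc hconv ξ ζ hξ hζ M hM ε hε hqual V hV
end
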